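/- Let t be an even natural number and let G be a graph on n vertices with more than (1 - 1/t)·(t-1)·n edges. Then G contains (as a subgraph) every tree T having t edges. -/

import Mathlib

/-!
Write `t = d + 1`. The hypothesis says that the average degree of `G` exceeds `c = 2 d² / (d + 1)`,
and `c ≥ 2 (d - 1)`, `c ≥ d`. Deleting a vertex of degree `< d` lowers the degree sum by at most
`2 (d - 1) ≤ c`, so the average degree stays above `c`. When no such vertex is left, the remaining
induced subgraph has minimum degree `≥ d`, and, its average degree exceeding `d`, a vertex `x` of
degree `≥ d + 1`. A tree with `d + 2` vertices then embeds greedily: remove a leaf `ℓ`, embed the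
rest leaf by leaf with the neighbour of `ℓ` sent to `x`, and send `ℓ` to a still unused neighbour
of `x`.
-/

open Finset

namespace SimpleGraph

section Trees

variable {V W : Type*} {T : SimpleGraph W} {H : SimpleGraph V}

theorem Copy.exists_extend_to_leaf [Fintype W] [H.LocallyFinite] {ℓ u : W}
    (hu : T.Adj ℓ u) (hℓ : ∀ w, T.Adj ℓ w → w = u) (f : Copy (T.induce {ℓ}ᶜ) H)
    (hdeg : Fintype.card W ≤ H.degree (f ⟨u, hu.ne'⟩) + 1) :
    ∃ g : Copy T H, ∀ w (hw : w ≠ ℓ), g w = f ⟨w, hw⟩ := by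
  classical
  set x := f ⟨u, hu.ne'⟩
  obtain ⟨y, hxy, hy⟩ : ∃ y, H.Adj x y ∧ ∀ w, f w ≠ y := by
    by_contra! h
    have hsub : H.neighborFinset x ⊆ (univ.image f).erase x := fun y hy => by
      rw [mem_neighborFinset] at hy
      obtain ⟨w, rfl⟩ := h y hy
      exact mem_erase.2 ⟨hy.ne', mem_image_of_mem _ (mem_univ _)⟩
    have := card_le_card hsub
    rw [card_erase_of_mem (mem_image_of_mem _ (mem_univ _)),
      card_image_of_injective _ (f := ⇑f) f.injective, card_univ, card_neighborFinset_eq_degree,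
      Fintype.card_compl_set, Set.card_singleton] at this
    have : 1 < Fintype.card W := Fintype.one_lt_card_iff.2 ⟨ℓ, u, hu.ne⟩
    omega
  let g (w : W) : V := if h : w = ℓ then y else f ⟨w, h⟩
  have hgℓ : g ℓ = y := dif_pos rfl
  have hg (w : W) (hw : w ≠ ℓ) : g w = f ⟨w, hw⟩ := dif_neg hw
  refine ⟨⟨⟨g, fun {a b} hab => ?_⟩, fun a b hab => ?_⟩, hg⟩
  · by_cases ha : a = ℓ <;> by_cases hb : b = ℓ
    · subst ha hb; exact absurd hab T.irrefl
    · subst ha; obtain rfl := hℓ b hab; simpa [hgℓ, hg b hb] using hxy.symm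
    · subst hb; obtain rfl := hℓ a hab.symm; simpa [hgℓ, hg a ha] using hxy
    · have hab' : (T.induce {ℓ}ᶜ).Adj ⟨a, ha⟩ ⟨b, hb⟩ := hab
      simpa [hg a ha, hg b hb] using f.toHom.map_adj hab'
  · by_cases ha : a = ℓ <;> by_cases hb : b = ℓ
    · exact ha.trans hb.symm
    · subst ha; exact absurd (hgℓ.symm.trans hab |>.trans (hg b hb)).symm (hy _)
    · subst hb; exact absurd ((hg a ha).symm.trans hab |>.trans hgℓ) (hy _)
    · exact congrArg Subtype.val (f.injective ((hg a ha).symm.trans hab |>.trans (hg b hb)))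

theorem IsTree.induce_compl_singleton_of_degree_eq_one (hT : T.IsTree) {ℓ : W}
    [Fintype (T.neighborSet ℓ)] (hℓ : T.degree ℓ = 1) : (T.induce {ℓ}ᶜ).IsTree :=
  ⟨hT.connected.induce_compl_singleton_of_degree_eq_one hℓ, hT.isAcyclic.induce _⟩

theorem IsTree.exists_copy_apply_eq [Fintype W] [H.LocallyFinite] {k : ℕ} (hT : T.IsTree)
    (hW : Fintype.card W ≤ k + 1) (hH : ∀ v, k ≤ H.degree v) (r : W) (x : V) :
    ∃ f : Copy T H, f r = x := by
  induction hn : Fintype.card W generalizing W with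
  | zero => exact (Fintype.card_eq_zero_iff.1 hn).elim r
  | succ n ih =>
    rcases subsingleton_or_nontrivial W with hW₁ | hW₁
    · exact ⟨⟨⟨fun _ => x, fun hab => absurd (Subsingleton.elim _ _) hab.ne⟩,
        fun a b _ => Subsingleton.elim a b⟩, rfl⟩
    classical
    obtain ⟨ℓ, hℓr, hℓ⟩ : ∃ ℓ, ℓ ≠ r ∧ T.degree ℓ = 1 := by
      obtain ⟨ℓ₁, ℓ₂, hne, h₁, h₂⟩ := hT.exists_ne_and_degree_eq_one
      by_cases h : ℓ₁ = r
      exacts [⟨ℓ₂, h ▸ hne.symm, h₂⟩, ⟨ℓ₁, h, h₁⟩]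
    obtain ⟨u, hu, huniq⟩ := degree_eq_one_iff_existsUnique_adj.1 hℓ
    have hcard : Fintype.card ↥({ℓ}ᶜ : Set W) = n := by
      rw [Fintype.card_compl_set, Set.card_singleton]; omega
    obtain ⟨f, hf⟩ := ih (hT.induce_compl_singleton_of_degree_eq_one hℓ) (by omega)
      ⟨r, hℓr.symm⟩ hcard
    obtain ⟨g, hg⟩ := Copy.exists_extend_to_leaf hu huniq f
      (by have := hH (f ⟨u, hu.ne'⟩); omega)
    exact ⟨g, (hg r hℓr.symm).trans hf⟩

theorem IsTree.isContained_of_le_degree [Fintype W] [H.LocallyFinite] {k : ℕ} (hT : T.IsTree)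
    (hW : Fintype.card W = k + 2) (hH : ∀ v, k ≤ H.degree v) {x : V}
    (hx : k + 1 ≤ H.degree x) : T ⊑ H := by
  classical
  have : Nontrivial W := Fintype.one_lt_card_iff_nontrivial.1 (by omega)
  obtain ⟨ℓ, -, -, hℓ, -⟩ := hT.exists_ne_and_degree_eq_one
  obtain ⟨u, hu, huniq⟩ := degree_eq_one_iff_existsUnique_adj.1 hℓ
  obtain ⟨f, hf⟩ := (hT.induce_compl_singleton_of_degree_eq_one hℓ).exists_copy_apply_eq
    (by rw [Fintype.card_compl_set, Set.card_singleton]; omega) hH ⟨u, hu.ne'⟩ x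
  obtain ⟨g, -⟩ := Copy.exists_extend_to_leaf hu huniq f (by rw [hf]; omega)
  exact ⟨g⟩

end Trees

section DenseCore

variable {V : Type*} (G : SimpleGraph V) [Fintype V] [DecidableRel G.Adj] [DecidableEq V]

theorem sum_card_neighborFinset_inter_erase {S : Finset V} {v : V} (hv : v ∈ S) :
    ∑ u ∈ S.erase v, #(G.neighborFinset u ∩ S.erase v) + 2 * #(G.neighborFinset v ∩ S) =
      ∑ u ∈ S, #(G.neighborFinset u ∩ S) := by
  have hsplit (u : V) : #(G.neighborFinset u ∩ S) =
      #(G.neighborFinset u ∩ S.erase v) + if G.Adj u v then 1 else 0 := by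
    rw [inter_erase]
    split_ifs with h
    · exact (card_erase_add_one (mem_inter.2 ⟨(G.mem_neighborFinset _ _).2 h, hv⟩)).symm
    · rw [erase_eq_of_notMem (by simp [h]), add_zero]
  have hback : ∑ u ∈ S.erase v, (if G.Adj u v then 1 else 0) = #(G.neighborFinset v ∩ S) := by
    rw [sum_boole, Nat.cast_id]
    congr 1
    ext w
    simp only [mem_filter, mem_erase, mem_inter, mem_neighborFinset]
    exact ⟨fun ⟨⟨_, hw⟩, h⟩ => ⟨h.symm, hw⟩, fun ⟨h, hw⟩ => ⟨⟨h.ne', hw⟩, h.symm⟩⟩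
  rw [← sum_erase_add S _ hv, sum_congr rfl fun u _ => hsplit u, sum_add_distrib, hback]
  ring

theorem exists_finset_le_card_neighborFinset_inter {d : ℕ} {c : ℝ} (hc₁ : 2 * ((d : ℝ) - 1) ≤ c)
    (hc₂ : (d : ℝ) ≤ c) (S : Finset V)
    (hS : c * #S < ∑ v ∈ S, (#(G.neighborFinset v ∩ S) : ℝ)) :
    ∃ S' : Finset V, (∀ v ∈ S', d ≤ #(G.neighborFinset v ∩ S')) ∧
      ∃ v ∈ S', d + 1 ≤ #(G.neighborFinset v ∩ S') := by
  induction S using Finset.strongInduction with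
  | H S ih =>
  by_cases hlow : ∃ v ∈ S, #(G.neighborFinset v ∩ S) < d
  · obtain ⟨v, hv, hvd⟩ := hlow
    refine ih _ (erase_ssubset hv) ?_
    have hsum := congrArg (Nat.cast : ℕ → ℝ) (G.sum_card_neighborFinset_inter_erase hv)
    push_cast at hsum
    have hvd' : (#(G.neighborFinset v ∩ S) : ℝ) + 1 ≤ d := by exact_mod_cast hvd
    rw [card_erase_of_mem hv, Nat.cast_sub (card_pos.2 ⟨v, hv⟩)]
    push_cast
    linarith
  · push Not at hlow
    refine ⟨S, hlow, ?_⟩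
    by_contra! hhigh
    have hsum : ∑ v ∈ S, (#(G.neighborFinset v ∩ S) : ℝ) ≤ d * #S := by
      calc _ ≤ ∑ _v ∈ S, (d : ℝ) :=
            sum_le_sum fun v hv => by exact_mod_cast Nat.lt_succ_iff.1 (hhigh v hv)
        _ = d * #S := by rw [sum_const, nsmul_eq_mul, mul_comm]
    nlinarith [mul_le_mul_of_nonneg_right hc₂ (Nat.cast_nonneg #S)]

theorem degree_induce_finset (S : Finset V) (v : (S : Set V)) :
    (G.induce (S : Set V)).degree v = #(G.neighborFinset v ∩ S) := by
  have := congrArg card (map_neighborFinset_induce (G := G) (s := (S : Set V)) v)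
  rw [card_map, card_neighborFinset_eq_degree, Finset.toFinset_coe] at this
  convert this

theorem exists_induce_le_degree {d : ℕ} {c : ℝ} (hc₁ : 2 * ((d : ℝ) - 1) ≤ c)
    (hc₂ : (d : ℝ) ≤ c) (hG : c * Fintype.card V < 2 * #G.edgeFinset) :
    ∃ S : Finset V, (∀ v, d ≤ (G.induce (S : Set V)).degree v) ∧
      ∃ v, d + 1 ≤ (G.induce (S : Set V)).degree v := by
  have hsum : ∑ v ∈ univ, (#(G.neighborFinset v ∩ univ) : ℝ) = 2 * #G.edgeFinset := by
    simp_rw [inter_univ, card_neighborFinset_eq_degree]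
    exact_mod_cast G.sum_degrees_eq_twice_card_edges
  obtain ⟨S, hS, v, hv, hvS⟩ :=
    G.exists_finset_le_card_neighborFinset_inter hc₁ hc₂ univ (by rwa [hsum, card_univ])
  refine ⟨S, fun w => ?_, ⟨v, hv⟩, ?_⟩ <;> rw [degree_induce_finset]
  exacts [hS w w.2, hvS]

end DenseCore

end SimpleGraph

open SimpleGraph in
theorem turan_trees_even_general {V : Type} [Fintype V] [DecidableEq V] (t n : ℕ)
    (G : SimpleGraph V) [DecidableRel G.Adj]
    (hn : Fintype.card V = n)
    (hm : (1 - 1 / (t : ℝ)) * ((t : ℝ) - 1) * n < G.edgeFinset.card) :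
    ∀ (W : Type) [Fintype W] [DecidableEq W] (T : SimpleGraph W)
      [DecidableRel T.Adj], T.IsTree → T.edgeFinset.card = t →
      ∃ f : W ↪ V, ∀ a b, T.Adj a b → G.Adj (f a) (f b) := by
  intro W _ _ T _ hT hTt
  suffices T ⊑ G by
    obtain ⟨f, hf⟩ := isContained_iff_exists_le_comap.1 this
    exact ⟨f, fun _ _ h => hf h⟩
  have hW : Fintype.card W = t + 1 := by have := hT.card_edgeFinset; omega
  subst hn
  rcases t with _ | d
  · have : Nonempty V := by
      by_contra! hV
      simp [Subsingleton.elim G ⊥] at hm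
    obtain ⟨f, -⟩ := hT.exists_copy_apply_eq (H := G) (k := 0) hW.le (fun _ => Nat.zero_le _)
      hT.connected.nonempty.some (Classical.arbitrary V)
    exact ⟨f⟩
  · have hd : (d : ℝ) ≤ d * d := by exact_mod_cast Nat.le_mul_self d
    obtain ⟨S, hS, x, hx⟩ :=
      G.exists_induce_le_degree (d := d) (c := 2 * ((1 - 1 / ((d : ℝ) + 1)) * d))
        (by field_simp; nlinarith) (by field_simp; nlinarith) (by push_cast at hm; linarith)
    exact (hT.isContained_of_le_degree hW hS hx).trans ⟨Copy.induce G _⟩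

/-- **Proposition (even case).** Let `t` be an even natural number and let `G`
be a graph on `n` vertices with more than `(1 - 1/t)·(t-1)·n` edges. Then `G`
contains every tree with `t` edges. -/
theorem turan_trees_even {V : Type} [Fintype V] [DecidableEq V] (t n : ℕ)
    (ht : Even t) (G : SimpleGraph V) [DecidableRel G.Adj]
    (hn : Fintype.card V = n)
    (hm : (1 - 1 / (t : ℝ)) * ((t : ℝ) - 1) * n < G.edgeFinset.card) :
    ∀ (W : Type) [Fintype W] [DecidableEq W] (T : SimpleGraph W)
      [DecidableRel T.Adj], T.IsTree → T.edgeFinset.card = t →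
      ∃ f : W ↪ V, ∀ a b, T.Adj a b → G.Adj (f a) (f b) :=
  turan_trees_even_general t n G hn hm
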